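/- Let M be a non-singular n×n matrix over a field, and let a be a column index such that the bottom entry M_{n,a} is non-zero. Then there exists a permutation matrix Π that moves column a of M to the rightmost (n-th) position, such that all anti-leading principal minors of M·Π are non-zero (i.e., for each k ∈ {1,…,n}, the determinant of the bottom-right k×k submatrix of M·Π is non-zero). -/

import Mathlib

/-!
Build the columns from right to left. Suppose columns for the bottom `k` rows are chosen with
non-zero anti-leading minor, and consider the bottom `k + 1` rows `B`. Expanding along the new
first column, `c ↦ det [B c | chosen columns]` is the linear form `c ↦ ∑ᵢ dᵢ B i c`, where
`d₀ ≠ 0` is the previous minor. Since the rows of `B` are independent this form is non-zero, so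
some column `c` works. The chosen columns are automatically distinct, because the full minor,
the determinant of the matrix of chosen columns, is non-zero.
-/

open Matrix

namespace Matrix

variable {R : Type*} [CommRing R] {n : ℕ}

def antiLeadingMinor (A : Matrix (Fin n) (Fin n) R) (k : ℕ) (hk : k ≤ n) : R :=
  (A.submatrix (fun i : Fin k => (⟨n - k + i.1, by omega⟩ : Fin n))
    (fun j : Fin k => (⟨n - k + j.1, by omega⟩ : Fin n))).det

theorem antiLeadingMinor_self (A : Matrix (Fin n) (Fin n) R) :
    A.antiLeadingMinor n le_rfl = A.det := by
  have hid : (fun i : Fin n => (⟨n - n + i.1, by omega⟩ : Fin n)) = id :=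
    funext fun i => Fin.ext (by simp)
  rw [antiLeadingMinor, hid, submatrix_id_id]

theorem antiLeadingMinor_submatrix_succ (A : Matrix (Fin (n + 1)) (Fin (n + 1)) R) (k : ℕ)
    (hk : k ≤ n) :
    A.antiLeadingMinor k (hk.trans n.le_succ) =
      (A.submatrix Fin.succ Fin.succ).antiLeadingMinor k hk := by
  have hsucc : (fun i : Fin k => (⟨n + 1 - k + i.1, by omega⟩ : Fin (n + 1))) =
      fun i => Fin.succ ⟨n - k + i.1, by omega⟩ :=
    funext fun i => Fin.ext (by simp; omega)
  rw [antiLeadingMinor, antiLeadingMinor, submatrix_submatrix, hsucc]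
  rfl

theorem det_submatrix_cons {ι : Type*} {k : ℕ} (B : Matrix (Fin (k + 1)) ι R) (c : ι)
    (g : Fin k → ι) :
    (B.submatrix id (Fin.cons c g : Fin (k + 1) → ι)).det =
      ∑ i : Fin (k + 1), (-1) ^ (i : ℕ) * (B.submatrix i.succAbove g).det * B i c := by
  rw [det_succ_column_zero]
  refine Finset.sum_congr rfl fun i _ => ?_
  simp only [submatrix_apply, id_eq, Fin.cons_zero, submatrix_submatrix]
  rw [mul_right_comm]
  rfl

theorem exists_det_submatrix_cons_ne_zero {F ι : Type*} [Field F] {k : ℕ}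
    (B : Matrix (Fin (k + 1)) ι F) (hB : LinearIndependent F B.row) (g : Fin k → ι)
    (hg : (B.submatrix Fin.succ g).det ≠ 0) :
    ∃ c, (B.submatrix id (Fin.cons c g : Fin (k + 1) → ι)).det ≠ 0 := by
  by_contra! h
  set d : Fin (k + 1) → F := fun i => (-1) ^ (i : ℕ) * (B.submatrix i.succAbove g).det
  have hdep : ∑ i, d i • B.row i = 0 := by
    funext c
    simpa [Finset.sum_apply, d, det_submatrix_cons] using h c
  have hd0 := Fintype.linearIndependent_iff.mp hB d hdep 0
  simp only [d, Fin.val_zero, pow_zero, one_mul, Fin.succAbove_zero] at hd0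
  exact hg hd0

theorem exists_antiLeadingMinor_submatrix_ne_zero {F ι : Type*} [Field F]
    (M : Matrix (Fin (n + 1)) ι F) (hM : LinearIndependent F M.row) (a : ι)
    (ha : M (Fin.last n) a ≠ 0) :
    ∃ g : Fin (n + 1) → ι, g (Fin.last n) = a ∧
      ∀ k (hk : k ≤ n + 1), (M.submatrix id g).antiLeadingMinor k hk ≠ 0 := by
  induction n with
  | zero =>
    refine ⟨fun _ => a, rfl, fun k hk => ?_⟩
    interval_cases k
    · simp [antiLeadingMinor]
    · rwa [antiLeadingMinor_self, det_fin_one]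
  | succ n ih =>
    let T : Matrix (Fin (n + 1)) ι F := M.submatrix Fin.succ id
    have hT : LinearIndependent F T.row := hM.comp _ (Fin.succ_injective _)
    obtain ⟨g, hg_last, hg⟩ := ih T hT (by simpa [T] using ha)
    have hTg : (M.submatrix Fin.succ g).det ≠ 0 := by
      simpa [T, antiLeadingMinor_self] using hg (n + 1) le_rfl
    obtain ⟨c, hc⟩ := exists_det_submatrix_cons_ne_zero M hM g hTg
    refine ⟨Fin.cons c g, by simpa using hg_last, fun k hk => ?_⟩
    rcases hk.lt_or_eq with hk | rfl
    · rw [antiLeadingMinor_submatrix_succ _ k (Nat.le_of_lt_succ hk)]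
      exact hg k _
    · rwa [antiLeadingMinor_self]

end Matrix

theorem stmt_5 {F : Type*} [Field F] (n : ℕ) (hn : 0 < n)
    (M : Matrix (Fin n) (Fin n) F) (hM : M.det ≠ 0)
    (a : Fin n) (ha : M ⟨n - 1, by omega⟩ a ≠ 0) :
    ∃ σ : Equiv.Perm (Fin n),
      σ ⟨n - 1, by omega⟩ = a ∧
      ∀ k : ℕ, (hk : k ≤ n) →
        ((M.submatrix id σ).submatrix
            (fun i : Fin k => (⟨n - k + i.1, by have := i.2; omega⟩ : Fin n))
            (fun j : Fin k => (⟨n - k + j.1, by have := j.2; omega⟩ : Fin n))).det ≠ 0 := by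
  obtain ⟨m, rfl⟩ : ∃ m, n = m + 1 := ⟨n - 1, by omega⟩
  have hlast : (⟨m + 1 - 1, by omega⟩ : Fin (m + 1)) = Fin.last m :=
    Fin.ext (by simp)
  rw [hlast] at ha ⊢
  obtain ⟨g, hg_last, hg⟩ :=
    exists_antiLeadingMinor_submatrix_ne_zero M (linearIndependent_rows_of_det_ne_zero hM) a ha
  have hg_det : (M.submatrix id g).det ≠ 0 := by
    simpa [antiLeadingMinor_self] using hg _ le_rfl
  have hg_inj : Function.Injective g := fun i j hij =>
    (linearIndependent_cols_of_det_ne_zero hg_det).injective (funext fun r => by simp [hij])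
  exact ⟨Equiv.ofBijective g hg_inj.bijective_of_finite, hg_last, hg⟩
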